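/- There exists a constant c > 0 such that for all m, n ∈ ℕ₀ and all integers l ≥ −min(m, n): (l+m+n)! / (2^{l+m+n+1} √((l+m)!(l+n)! n! m!)) ≤ c/⟨m−n⟩. -/

import Mathlib

/-!
Put `N = l + m + n`. Since `N!² = C(N,n) C(N,m) (l+m)! (l+n)! n! m!`, the left side equals
`√(C(N,n) C(N,m)) / 2^(N+1)`. The row `k ↦ C(N,k)` is log-concave, so for `n ≤ m` every product
`C(N,k) C(N,n+m-k)` with `n ≤ k ≤ m` dominates `C(N,n) C(N,m)`. By AM–GM the geometric mean
`√(C(N,n) C(N,m))` is then at most the average of the `m - n + 1` coefficients `C(N,k)`,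
`n ≤ k ≤ m`, which is at most `2^N / (m - n + 1)`. Hence `c = 1/2` works.
-/

open Real

/-- `⟨a⟩ := max (1, |a|)` for an integer `a`, as a real number. -/
noncomputable def jap (a : ℤ) : ℝ := max 1 |(a : ℝ)|

open Finset Nat

namespace Nat

theorem choose_mul_choose_succ_le {N a c : ℕ} (hac : a ≤ c) :
    N.choose a * N.choose (c + 1) ≤ N.choose (a + 1) * N.choose c := by
  have ha : N.choose (a + 1) * (a + 1) = N.choose a * (N - a) := choose_succ_right_eq N a
  have hc : N.choose (c + 1) * (c + 1) = N.choose c * (N - c) := choose_succ_right_eq N c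
  refine le_of_mul_le_mul_right ?_ (show 0 < (a + 1) * (c + 1) by positivity)
  calc N.choose a * N.choose (c + 1) * ((a + 1) * (c + 1))
      = N.choose a * N.choose c * ((N - c) * (a + 1)) := by
        linear_combination (N.choose a * (a + 1)) * hc
    _ ≤ N.choose a * N.choose c * ((N - a) * (c + 1)) :=
        Nat.mul_le_mul_left _ (Nat.mul_le_mul (by omega) (by omega))
    _ = N.choose (a + 1) * N.choose c * ((a + 1) * (c + 1)) := by
        linear_combination (N.choose c * (c + 1)) * ha.symm

theorem choose_mul_choose_add_le {N a b k : ℕ} (h : a + k ≤ b) :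
    N.choose a * N.choose (b + k) ≤ N.choose (a + k) * N.choose b := by
  induction k generalizing a with
  | zero => rfl
  | succ k ih =>
    calc N.choose a * N.choose (b + k + 1)
        ≤ N.choose (a + 1) * N.choose (b + k) := choose_mul_choose_succ_le (by omega)
      _ ≤ N.choose (a + 1 + k) * N.choose b := ih (by omega)
      _ = N.choose (a + (k + 1)) * N.choose b := by rw [add_right_comm, add_assoc]

theorem choose_mul_choose_le_of_add_eq {N a b c e : ℕ} (hab : a ≤ b) (hac : a ≤ c)
    (h : a + e = b + c) : N.choose a * N.choose e ≤ N.choose b * N.choose c := by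
  wlog hbc : b ≤ c generalizing b c
  · rw [mul_comm (N.choose b)]
    exact this hac hab (by omega) (by omega)
  obtain ⟨k, rfl⟩ := Nat.exists_eq_add_of_le hab
  rw [show e = c + k by omega]
  exact choose_mul_choose_add_le hbc

theorem sum_range_choose_add_le (N n d : ℕ) : ∑ j ∈ range d, N.choose (n + j) ≤ 2 ^ N := by
  rw [← Nat.add_sub_cancel_left (n := n) (m := d), ← sum_Ico_eq_sum_range, ← sum_range_choose]
  refine sum_le_sum_of_ne_zero fun i _ hi => mem_range.2 ?_
  by_contra! hNi
  exact hi (choose_eq_zero_of_lt (by omega))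

end Nat

theorem two_mul_sqrt_le_add {x a b : ℝ} (ha : 0 ≤ a) (hb : 0 ≤ b) (h : x ≤ a * b) :
    2 * √x ≤ a + b := by
  have hab : x ≤ ((a + b) / 2) ^ 2 := by nlinarith [sq_nonneg (a - b)]
  linarith [(sqrt_le_left (by positivity)).2 hab]

theorem succ_mul_sqrt_choose_mul_choose_add_le (N a d : ℕ) :
    ((d : ℝ) + 1) * √((N.choose a : ℝ) * N.choose (a + d)) ≤ 2 ^ N := by
  have hpair : ∀ j ∈ range (d + 1), 2 * √((N.choose a : ℝ) * N.choose (a + d)) ≤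
      (N.choose (a + j) : ℝ) + N.choose (a + (d - j)) := by
    intro j hj
    have hj : j ≤ d := Nat.lt_succ_iff.1 (mem_range.1 hj)
    refine two_mul_sqrt_le_add (by positivity) (by positivity) ?_
    exact_mod_cast Nat.choose_mul_choose_le_of_add_eq (N := N) (by omega) (by omega) (by omega)
  have hsum : ∑ j ∈ range (d + 1), (N.choose (a + j) : ℝ) ≤ 2 ^ N := by
    exact_mod_cast Nat.sum_range_choose_add_le N a (d + 1)
  have hmirror : ∑ j ∈ range (d + 1), (N.choose (a + (d - j)) : ℝ) =
      ∑ j ∈ range (d + 1), (N.choose (a + j) : ℝ) :=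
    sum_range_reflect (fun j => (N.choose (a + j) : ℝ)) (d + 1)
  have := sum_le_sum hpair
  rw [sum_const, card_range, nsmul_eq_mul, sum_add_distrib, hmirror] at this
  push_cast at this
  linarith

theorem succ_abs_sub_mul_sqrt_choose_mul_choose_le (N a b : ℕ) :
    (|(a : ℝ) - b| + 1) * √((N.choose a : ℝ) * N.choose b) ≤ 2 ^ N := by
  wlog hab : a ≤ b generalizing a b
  · rw [abs_sub_comm, mul_comm (N.choose a : ℝ)]
    exact this b a (by omega)
  obtain ⟨d, rfl⟩ := Nat.exists_eq_add_of_le hab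
  simpa [abs_of_nonneg] using succ_mul_sqrt_choose_mul_choose_add_le N a d

theorem factorial_div_sqrt_eq_sqrt_choose_mul_choose {A B m n : ℕ} (h : A + m = B + n) :
    ((B + n)! : ℝ) / √((B ! : ℝ) * A ! * n ! * m !) =
      √(((B + n).choose n : ℝ) * (B + n).choose m) := by
  have hsq : ((B + n)! : ℝ) * (B + n)! =
      ((B + n).choose n * (B + n).choose m : ℝ) * (B ! * A ! * n ! * m !) := by
    have h₁ := add_choose_mul_factorial_mul_factorial B n
    have h₂ := add_choose_mul_factorial_mul_factorial A m
    rw [h] at h₂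
    have : (B + n)! * (B + n)! = (B + n).choose n * (B + n).choose m * (B ! * A ! * n ! * m !) :=
      calc (B + n)! * (B + n)! = ((B + n).choose n * B ! * n !) * ((B + n).choose m * A ! * m !) := by
            rw [h₁, h₂]
        _ = _ := by ring
    exact_mod_cast this
  rw [div_eq_iff (by positivity), ← sqrt_mul (by positivity), ← hsq, sqrt_mul_self (by positivity)]

theorem jap_le_abs_add_one (a : ℤ) : jap a ≤ |(a : ℝ)| + 1 :=
  max_le (by linarith [abs_nonneg (a : ℝ)]) (by linarith)

theorem one_le_jap (a : ℤ) : 1 ≤ jap a := le_max_left _ _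

/-- There is `c > 0` such that for all `m, n ∈ ℕ₀` and integers `l ≥ −min(m,n)`:
`(l+m+n)! / (2^{l+m+n+1} √((l+m)!(l+n)! n! m!)) ≤ c/⟨m−n⟩`. -/
theorem b_lmn_decay_bound :
    ∃ c : ℝ, 0 < c ∧ ∀ (m n : ℕ) (l : ℤ), -(min m n : ℤ) ≤ l →
      ((l + m + n).toNat.factorial : ℝ) / (2 ^ ((l + m + n).toNat + 1) *
        Real.sqrt (((l + m).toNat.factorial : ℝ) * (l + n).toNat.factorial *
          n.factorial * m.factorial)) ≤ c / jap ((m : ℤ) - n) := by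
  refine ⟨1 / 2, by norm_num, fun m n l hl => ?_⟩
  set B := (l + m).toNat
  have hN : (l + m + n).toNat = B + n := by omega
  have hrow : (l + n).toNat + m = B + n := by omega
  rw [hN, mul_comm, ← div_div, factorial_div_sqrt_eq_sqrt_choose_mul_choose hrow,
    div_le_div_iff₀ (by positivity) (by linarith [one_le_jap ((m : ℤ) - n)])]
  have hjap : jap ((m : ℤ) - n) ≤ |(n : ℝ) - m| + 1 := by
    simpa [abs_sub_comm] using jap_le_abs_add_one ((m : ℤ) - n)
  calc _ ≤ √((B + n).choose n * (B + n).choose m : ℝ) * (|(n : ℝ) - m| + 1) := by gcongr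
    _ ≤ 2 ^ (B + n) := by
        linarith [succ_abs_sub_mul_sqrt_choose_mul_choose_le (B + n) n m]
    _ = 1 / 2 * 2 ^ (B + n + 1) := by ring
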